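/- The PM-monoid ℛ_n decomposes as a disjoint union of double cosets of its unit group over the standard idempotents: ℛ_n = ⊔_{e ∈ Λ_n} W e W, where Λ_n is the set of idempotents corresponding to interval partitions (k_1,...,k_{m-1}) with 1 ≤ k_1 < ... < k_{m-1} < n, and the union is disjoint. -/

import Mathlib

/-- `l` is an ordered set partition of `{0,...,n-1}`: a list of pairwise disjoint
nonempty blocks whose union is everything. -/
def IsOSP (n : ℕ) (l : List (Finset (Fin n))) : Prop :=
  (∀ b ∈ l, b ≠ ∅) ∧ l.Pairwise Disjoint ∧ l.foldr (· ∪ ·) ∅ = Finset.univ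

/-- Intersection product of ordered set partitions: list the nonempty
intersections `p_i ∩ q_j`, ordered first by `j` then by `i`. -/
def ospMul (n : ℕ) (p q : List (Finset (Fin n))) : List (Finset (Fin n)) :=
  (q.flatMap (fun b => p.map (fun a => a ∩ b))).filter (fun a => a ≠ ∅)

/-- Blockwise application of a permutation to an ordered set partition. -/
def permAct (n : ℕ) (σ : Equiv.Perm (Fin n)) (p : List (Finset (Fin n))) :
    List (Finset (Fin n)) :=
  p.map (fun b => b.image σ)

/-- The PM-monoid product: `(σ,p)·(τ,q) = (στ, τ⁻¹(p) * q)`. -/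
def pmMul (n : ℕ) (x y : Equiv.Perm (Fin n) × List (Finset (Fin n))) :
    Equiv.Perm (Fin n) × List (Finset (Fin n)) :=
  (x.1 * y.1, ospMul n (permAct n y.1⁻¹ x.2) y.2)

/-- The identity element `(id, ({1,...,n}))` of the PM-monoid. -/
def pmId (n : ℕ) : Equiv.Perm (Fin n) × List (Finset (Fin n)) :=
  ((1 : Equiv.Perm (Fin n)), [(Finset.univ : Finset (Fin n))])

/-- `x* = (σ⁻¹, σ(p))`. -/
def pmStar (n : ℕ) (x : Equiv.Perm (Fin n) × List (Finset (Fin n))) :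
    Equiv.Perm (Fin n) × List (Finset (Fin n)) :=
  (x.1⁻¹, permAct n x.1 x.2)

/-- Stirling numbers of the second kind. -/
def stirling2 : ℕ → ℕ → ℕ
  | 0, 0 => 1
  | 0, _ + 1 => 0
  | _ + 1, 0 => 0
  | n + 1, m + 1 => (m + 1) * stirling2 n (m + 1) + stirling2 n m

/-- Interval ordered set partition: blocks are consecutive intervals in increasing order. -/
def IsIntervalOSP (n : ℕ) (l : List (Finset (Fin n))) : Prop :=
  IsOSP n l ∧ l.Pairwise (fun a b => ∀ x ∈ a, ∀ y ∈ b, x < y)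

/-!
Write `x = (σ, q)`. A double coset element is `u e_p v = (u v, v⁻¹(p))`, so `x ∈ W e_p W`
exactly when `q` is a blockwise permutation image of `p`, i.e. when `q` and `p` have the same
list of block sizes. Every composition of `n` is the list of block sizes of exactly one
interval partition.
-/

section FinsetLists

variable {α : Type*} [DecidableEq α]

theorem mem_foldr_union {l : List (Finset α)} {x : α} :
    x ∈ l.foldr (· ∪ ·) ∅ ↔ ∃ b ∈ l, x ∈ b := by
  induction l with
  | nil => simp
  | cons a t ih => simp [ih]

theorem image_foldr_union {β : Type*} [DecidableEq β] (f : α → β) (l : List (Finset α)) :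
    (l.foldr (· ∪ ·) ∅).image f = (l.map (·.image f)).foldr (· ∪ ·) ∅ := by
  induction l with
  | nil => simp
  | cons a t ih => simp [Finset.image_union, ih]

theorem card_foldr_union_of_pairwise_disjoint {l : List (Finset α)} (hl : l.Pairwise Disjoint) :
    (l.foldr (· ∪ ·) ∅).card = (l.map Finset.card).sum := by
  induction l with
  | nil => simp
  | cons a t ih =>
    rw [List.pairwise_cons] at hl
    have hdisj : Disjoint a (t.foldr (· ∪ ·) ∅) := by
      rw [Finset.disjoint_right]
      intro x hx hxa
      obtain ⟨b, hb, hxb⟩ := mem_foldr_union.mp hx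
      exact Finset.disjoint_left.mp (hl.1 b hb) hxa hxb
    simp only [List.foldr_cons, List.map_cons, List.sum_cons]
    rw [Finset.card_union_of_disjoint hdisj, ih hl.2]

noncomputable def matchBlocks : List (Finset α) → List (Finset α) → α → α
  | a :: p, b :: q, x =>
      if hx : x ∈ a then
        if h : a.card = b.card then (Finset.equivOfCardEq h ⟨x, hx⟩ : α) else x
      else matchBlocks p q x
  | _, _, x => x

theorem image_matchBlocks_cons_self {a b : Finset α} (p q : List (Finset α))
    (h : a.card = b.card) :
    a.image (matchBlocks (a :: p) (b :: q)) = b := by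
  have hmatch : ∀ x (hx : x ∈ a),
      matchBlocks (a :: p) (b :: q) x = Finset.equivOfCardEq h ⟨x, hx⟩ := by
    intro x hx
    simp only [matchBlocks, dif_pos hx, dif_pos h]
  ext y
  simp only [Finset.mem_image]
  constructor
  · rintro ⟨x, hx, rfl⟩
    rw [hmatch x hx]
    exact Finset.coe_mem _
  · intro hy
    refine ⟨(Finset.equivOfCardEq h).symm ⟨y, hy⟩, Finset.coe_mem _, ?_⟩
    rw [hmatch _ (Finset.coe_mem _)]
    simp

theorem image_matchBlocks_cons_of_disjoint {a b c : Finset α} (p q : List (Finset α))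
    (hac : Disjoint a c) :
    c.image (matchBlocks (a :: p) (b :: q)) = c.image (matchBlocks p q) := by
  refine Finset.image_congr fun x hx => ?_
  simp only [matchBlocks, dif_neg (Finset.disjoint_right.mp hac hx)]

theorem map_image_matchBlocks {p q : List (Finset α)} (hp : p.Pairwise Disjoint)
    (h : p.map Finset.card = q.map Finset.card) :
    p.map (·.image (matchBlocks p q)) = q := by
  induction p generalizing q with
  | nil => cases q <;> simp_all
  | cons a p ih =>
    obtain _ | ⟨b, q⟩ := q
    · simp at h
    simp only [List.map_cons, List.cons.injEq] at h ⊢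
    rw [List.pairwise_cons] at hp
    refine ⟨image_matchBlocks_cons_self p q h.1, .trans ?_ (ih hp.2 h.2)⟩
    exact List.map_congr_left fun c hc => image_matchBlocks_cons_of_disjoint p q (hp.1 c hc)

theorem exists_perm_map_image_eq [Fintype α] {p q : List (Finset α)}
    (hp : p.Pairwise Disjoint) (hpU : p.foldr (· ∪ ·) ∅ = Finset.univ)
    (hqU : q.foldr (· ∪ ·) ∅ = Finset.univ) (h : p.map Finset.card = q.map Finset.card) :
    ∃ σ : Equiv.Perm α, p.map (·.image σ) = q := by
  have hmap := map_image_matchBlocks hp h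
  have hsurj : Function.Surjective (matchBlocks p q) := by
    intro y
    have hy : y ∈ Finset.univ.image (matchBlocks p q) := by
      rw [← hpU, image_foldr_union, hmap, hqU]
      exact Finset.mem_univ y
    obtain ⟨x, -, hx⟩ := Finset.mem_image.mp hy
    exact ⟨x, hx⟩
  exact ⟨Equiv.ofBijective _ (Finite.surjective_iff_bijective.mp hsurj), hmap⟩

end FinsetLists

section OrderedBlocks

variable {α : Type*} [LinearOrder α]

theorem subset_of_union_eq_of_forall_lt {a a' U U' : Finset α}
    (hU : ∀ x ∈ a, ∀ y ∈ U, x < y) (hU' : ∀ x ∈ a', ∀ y ∈ U', x < y)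
    (h : a ∪ U = a' ∪ U') {x : α} (hxa : x ∈ a) (hxa' : x ∉ a') : a' ⊆ a := by
  have hxU' : x ∈ U' := by
    have : x ∈ a' ∪ U' := h ▸ Finset.mem_union_left U hxa
    exact (Finset.mem_union.mp this).resolve_left hxa'
  intro y hy
  have : y ∈ a ∪ U := h ▸ Finset.mem_union_left U' hy
  refine (Finset.mem_union.mp this).resolve_right fun hyU => ?_
  exact lt_asymm (hU x hxa y hyU) (hU' y hy x hxU')

theorem eq_of_union_eq_of_forall_lt {a a' U U' : Finset α}
    (hU : ∀ x ∈ a, ∀ y ∈ U, x < y) (hU' : ∀ x ∈ a', ∀ y ∈ U', x < y)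
    (h : a ∪ U = a' ∪ U') (hcard : a.card = a'.card) : a = a' := by
  by_cases hsub : a ⊆ a'
  · exact Finset.eq_of_subset_of_card_le hsub hcard.ge
  · obtain ⟨x, hxa, hxa'⟩ := Finset.not_subset.mp hsub
    exact (Finset.eq_of_subset_of_card_le
      (subset_of_union_eq_of_forall_lt hU hU' h hxa hxa') hcard.le).symm

theorem forall_lt_foldr_union {a : Finset α} {l : List (Finset α)}
    (h : ∀ b ∈ l, ∀ x ∈ a, ∀ y ∈ b, x < y) : ∀ x ∈ a, ∀ y ∈ l.foldr (· ∪ ·) ∅, x < y := by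
  intro x hx y hy
  obtain ⟨b, hb, hyb⟩ := mem_foldr_union.mp hy
  exact h b hb x hx y hyb

theorem eq_of_pairwise_lt_of_foldr_union_eq {p p' : List (Finset α)}
    (hp : p.Pairwise fun s t => ∀ x ∈ s, ∀ y ∈ t, x < y)
    (hp' : p'.Pairwise fun s t => ∀ x ∈ s, ∀ y ∈ t, x < y)
    (hU : p.foldr (· ∪ ·) ∅ = p'.foldr (· ∪ ·) ∅)
    (hcard : p.map Finset.card = p'.map Finset.card) : p = p' := by
  induction p generalizing p' with
  | nil => cases p' <;> simp_all
  | cons a t ih =>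
    obtain _ | ⟨a', t'⟩ := p'
    · simp at hcard
    rw [List.pairwise_cons] at hp hp'
    simp only [List.map_cons, List.cons.injEq, List.foldr_cons] at hcard hU
    have hlt := forall_lt_foldr_union hp.1
    have hlt' := forall_lt_foldr_union hp'.1
    obtain rfl := eq_of_union_eq_of_forall_lt hlt hlt' hU hcard.1
    have hdisj {l : List (Finset α)} (h : ∀ x ∈ a, ∀ y ∈ l.foldr (· ∪ ·) ∅, x < y) :
        Disjoint a (l.foldr (· ∪ ·) ∅) :=
      Finset.disjoint_left.mpr fun x hx hx' => lt_irrefl x (h x hx x hx')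
    have hU_tail : t.foldr (· ∪ ·) ∅ = t'.foldr (· ∪ ·) ∅ := by
      rw [← Finset.union_sdiff_cancel_left (hdisj hlt), hU,
        Finset.union_sdiff_cancel_left (hdisj hlt')]
    rw [ih hp.2 hp'.2 hU_tail hcard.2]

theorem pairwise_disjoint_of_pairwise_lt {p : List (Finset (α))}
    (hp : p.Pairwise fun s t => ∀ x ∈ s, ∀ y ∈ t, x < y) : p.Pairwise Disjoint :=
  hp.imp fun h => Finset.disjoint_left.mpr fun x hxs hxt => lt_irrefl x (h x hxs x hxt)

end OrderedBlocks

section IntervalBlocks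

variable {n : ℕ}

/-- `intervalBlocks n a [c₀, c₁, …]` is `[[a, a + c₀), [a + c₀, a + c₀ + c₁), …]` in `Fin n`. -/
def intervalBlocks (n : ℕ) : ℕ → List ℕ → List (Finset (Fin n))
  | _, [] => []
  | a, c :: cs =>
      (Finset.univ.filter fun x : Fin n => a ≤ x ∧ x < a + c) :: intervalBlocks n (a + c) cs

theorem card_filter_le_and_lt {a c : ℕ} (h : a + c ≤ n) :
    (Finset.univ.filter fun x : Fin n => a ≤ x ∧ x < a + c).card = c := by
  have himg : (Finset.univ.filter fun x : Fin n => a ≤ x ∧ x < a + c).image Fin.val =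
      Finset.Ico a (a + c) := by
    ext m
    simp only [Finset.mem_image, Finset.mem_filter, Finset.mem_univ, true_and, Finset.mem_Ico]
    constructor
    · rintro ⟨x, hx, rfl⟩
      exact hx
    · intro hm
      exact ⟨⟨m, by omega⟩, hm, rfl⟩
  rw [← Finset.card_image_of_injective _ Fin.val_injective, himg, Nat.card_Ico,
    Nat.add_sub_cancel_left]

theorem le_of_mem_intervalBlocks {cs : List ℕ} {a : ℕ} {b : Finset (Fin n)}
    (hb : b ∈ intervalBlocks n a cs) {x : Fin n} (hx : x ∈ b) : a ≤ x := by
  induction cs generalizing a with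
  | nil => simp [intervalBlocks] at hb
  | cons c cs ih =>
    simp only [intervalBlocks, List.mem_cons] at hb
    rcases hb with rfl | hb
    · exact (Finset.mem_filter.mp hx).2.1
    · exact (Nat.le_add_right a c).trans (ih hb)

theorem pairwise_lt_intervalBlocks (a : ℕ) (cs : List ℕ) :
    (intervalBlocks n a cs).Pairwise fun s t => ∀ x ∈ s, ∀ y ∈ t, x < y := by
  induction cs generalizing a with
  | nil => exact List.Pairwise.nil
  | cons c cs ih =>
    refine List.Pairwise.cons (fun b hb x hx y hy => ?_) (ih (a + c))
    have hxc : (x : ℕ) < a + c := (Finset.mem_filter.mp hx).2.2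
    exact Fin.lt_def.mpr (hxc.trans_le (le_of_mem_intervalBlocks hb hy))

theorem foldr_union_intervalBlocks {a : ℕ} {cs : List ℕ} (h : a + cs.sum = n) :
    (intervalBlocks n a cs).foldr (· ∪ ·) ∅ = Finset.univ.filter fun x : Fin n => a ≤ x := by
  induction cs generalizing a with
  | nil =>
    rw [List.sum_nil, add_zero] at h
    subst h
    ext x
    simp [intervalBlocks]
  | cons c cs ih =>
    rw [List.sum_cons, ← add_assoc] at h
    ext x
    simp only [intervalBlocks, List.foldr_cons, ih h, Finset.mem_union, Finset.mem_filter,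
      Finset.mem_univ, true_and]
    omega

theorem map_card_intervalBlocks {a : ℕ} {cs : List ℕ} (h : a + cs.sum ≤ n) :
    (intervalBlocks n a cs).map Finset.card = cs := by
  induction cs generalizing a with
  | nil => rfl
  | cons c cs ih =>
    rw [List.sum_cons, ← add_assoc] at h
    simp only [intervalBlocks, List.map_cons]
    rw [card_filter_le_and_lt (by omega), ih h]

theorem exists_isIntervalOSP_map_card_eq {cs : List ℕ} (hsum : cs.sum = n) (hpos : 0 ∉ cs) :
    ∃ p, IsIntervalOSP n p ∧ p.map Finset.card = cs := by
  have hcard := map_card_intervalBlocks (n := n) (a := 0) (cs := cs) (by omega)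
  have hlt := pairwise_lt_intervalBlocks (n := n) 0 cs
  refine ⟨intervalBlocks n 0 cs, ⟨⟨fun b hb hbe => hpos ?_, ?_, ?_⟩, hlt⟩, hcard⟩
  · rw [← hcard]
    exact List.mem_map.mpr ⟨b, hb, by rw [hbe, Finset.card_empty]⟩
  · exact pairwise_disjoint_of_pairwise_lt hlt
  · rw [foldr_union_intervalBlocks (by omega)]
    simp

theorem IsIntervalOSP.eq_of_map_card_eq {p q : List (Finset (Fin n))} (hp : IsIntervalOSP n p)
    (hq : IsIntervalOSP n q) (h : p.map Finset.card = q.map Finset.card) : p = q :=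
  eq_of_pairwise_lt_of_foldr_union_eq hp.2 hq.2 (hp.1.2.2.trans hq.1.2.2.symm) h

end IntervalBlocks

section PMMonoid

variable {n : ℕ}

theorem IsOSP.sum_map_card {p : List (Finset (Fin n))} (hp : IsOSP n p) :
    (p.map Finset.card).sum = n := by
  rw [← card_foldr_union_of_pairwise_disjoint hp.2.1, hp.2.2, Finset.card_univ,
    Fintype.card_fin]

theorem IsOSP.zero_notMem_map_card {p : List (Finset (Fin n))} (hp : IsOSP n p) :
    0 ∉ p.map Finset.card := by
  simp only [List.mem_map, Finset.card_eq_zero, not_exists, not_and]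
  exact fun b hb hbe => hp.1 b hb hbe

theorem permAct_one (p : List (Finset (Fin n))) : permAct n 1 p = p := by
  simp [permAct]

theorem map_card_permAct (σ : Equiv.Perm (Fin n)) (p : List (Finset (Fin n))) :
    (permAct n σ p).map Finset.card = p.map Finset.card := by
  simp only [permAct, List.map_map]
  exact List.map_congr_left fun b _ => Finset.card_image_of_injective b σ.injective

theorem IsOSP.exists_permAct_eq {p q : List (Finset (Fin n))} (hp : IsOSP n p)
    (hq : IsOSP n q) (h : p.map Finset.card = q.map Finset.card) :
    ∃ σ, permAct n σ p = q :=
  exists_perm_map_image_eq hp.2.1 hp.2.2 hq.2.2 h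

theorem ospMul_univ_left {p : List (Finset (Fin n))} (hp : ∀ b ∈ p, b ≠ ∅) :
    ospMul n [Finset.univ] p = p := by
  simp only [ospMul, List.map_singleton, Finset.univ_inter, List.flatMap_singleton',
    List.filter_eq_self]
  simpa using hp

theorem ospMul_univ_right {p : List (Finset (Fin n))} (hp : ∀ b ∈ p, b ≠ ∅) :
    ospMul n p [Finset.univ] = p := by
  simp only [ospMul, List.flatMap_singleton, Finset.inter_univ, List.map_id', List.filter_eq_self]
  simpa using hp

theorem pmMul_unit_mul_unit (u v : Equiv.Perm (Fin n)) {p : List (Finset (Fin n))}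
    (hp : ∀ b ∈ p, b ≠ ∅) :
    pmMul n (pmMul n ((u, [Finset.univ]) : Equiv.Perm (Fin n) × List (Finset (Fin n)))
      (1, p)) (v, [Finset.univ]) = (u * v, permAct n v⁻¹ p) := by
  have hp' : ∀ b ∈ permAct n v⁻¹ p, b ≠ ∅ := by
    simpa [permAct] using hp
  simp only [pmMul, mul_one, inv_one, permAct_one, ospMul_univ_left hp, ospMul_univ_right hp']

end PMMonoid

theorem stmt11_general (n : ℕ)
    (x : Equiv.Perm (Fin n) × List (Finset (Fin n))) (hx : IsOSP n x.2) :
    ∃! p : List (Finset (Fin n)), IsIntervalOSP n p ∧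
      ∃ u v : Equiv.Perm (Fin n),
        x = pmMul n (pmMul n ((u, [Finset.univ]) : Equiv.Perm (Fin n) × List (Finset (Fin n)))
          (1, p)) (v, [Finset.univ]) := by
  obtain ⟨p, hp, hcard⟩ :=
    exists_isIntervalOSP_map_card_eq hx.sum_map_card hx.zero_notMem_map_card
  obtain ⟨σ, hσ⟩ := hp.1.exists_permAct_eq hx hcard
  refine ⟨p, ⟨hp, x.1 * σ, σ⁻¹, ?_⟩, ?_⟩
  · rw [pmMul_unit_mul_unit _ _ hp.1.1, inv_inv, mul_inv_cancel_right, hσ]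
  · rintro p' ⟨hp', u, v, rfl⟩
    rw [pmMul_unit_mul_unit u v hp'.1.1, map_card_permAct] at hcard
    exact hp'.eq_of_map_card_eq hp hcard.symm

/-- `ℛ_n = ⊔_{e ∈ Λ_n} W e W`, a disjoint union of double cosets over
the standard interval-partition idempotents. -/
theorem stmt11 (n : ℕ) (hn : 1 ≤ n)
    (x : Equiv.Perm (Fin n) × List (Finset (Fin n))) (hx : IsOSP n x.2) :
    ∃! p : List (Finset (Fin n)), IsIntervalOSP n p ∧
      ∃ u v : Equiv.Perm (Fin n),
        x = pmMul n (pmMul n ((u, [Finset.univ]) : Equiv.Perm (Fin n) × List (Finset (Fin n)))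
          (1, p)) (v, [Finset.univ]) :=
  stmt11_general n x hx
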